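/- If q = t^2 and X is the non-degenerate Hermitian variety in P^n(F_q), then the number of F_q-rational points of X equals (t^(n+1) - (-1)^(n+1)) * (t^n - (-1)^n) / (t^2 - 1). -/

import Mathlib

/-!
Let `N m` count the solutions of `x₁^(t+1) + ⋯ + x_m^(t+1) = 0` in `𝔽_q^m`. The values of this
form are fixed by the Frobenius `y ↦ y^t`, i.e. lie in `𝔽_t`, and the norm `y ↦ y^(t+1)` maps
`𝔽_q^×` onto `𝔽_t^×` with fibres of size `t + 1`. Fibring over the last `m` coordinates gives
`N (m+1) = N m + (t + 1) (q^m - N m)`, whose solution with `N 0 = 1` is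
`N (m+1) = 1 + (t^(m+1) - (-1)^(m+1)) (t^m - (-1)^m)`. The nonzero solutions in `𝔽_q^(n+1)`
fall into the projective points in classes of size `q - 1`.
-/
open Finset
open scoped LinearAlgebra.Projectivization

namespace Projectivization

variable {k V : Type*} [DivisionRing k] [AddCommGroup V] [Module k V]

theorem card_cone [Finite V] {P : V → Prop} (hP : ∀ (c : kˣ) v, P (c • v) ↔ P v) (hP0 : P 0) :
    Nat.card {v : V // P v} = Nat.card {x : ℙ k V // P x.rep} * (Nat.card k - 1) + 1 := by
  have hrep (v : {v : V // v ≠ 0}) :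
      P (nonZeroEquivProjectivizationProdUnits k V v).1.rep ↔ P v := by
    obtain ⟨c, hc⟩ := exists_smul_eq_mk_rep k v.1 v.2
    exact hc ▸ hP c v
  have hnonzero : {v : {v : V // v ≠ 0} // P v} ≃ {x : ℙ k V // P x.rep} × kˣ :=
    ((nonZeroEquivProjectivizationProdUnits k V).subtypeEquiv (fun v => (hrep v).symm)).trans
      Equiv.prodSubtypeFstEquivSubtypeProd
  have hsplit : Nat.card {v : V // P v} = Nat.card {v : {v : V // v ≠ 0} // P v} + 1 := by
    classical
    have := Fintype.ofFinite V
    rw [Nat.card_congr (Equiv.subtypeSubtypeEquivSubtypeInter _ P), Nat.card_eq_fintype_card,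
      Nat.card_eq_fintype_card, Fintype.card_subtype, Fintype.card_subtype,
      ← card_insert_of_notMem (s := {v | v ≠ 0 ∧ P v}) (a := 0) (by simp)]
    congr 1
    ext v
    by_cases hv : v = 0 <;> simp [hv, hP0]
  rw [hsplit, Nat.card_congr hnonzero, Nat.card_prod, Nat.card_units]

end Projectivization

theorem IsCyclic.card_pow_eq_of_pow_eq_one {G : Type*} [CommGroup G] [IsCyclic G] [Fintype G]
    [DecidableEq G] {d : ℕ} (hd : d ∣ Fintype.card G) {c : G}
    (hc : c ^ (Fintype.card G / d) = 1) : #{y : G | y ^ d = c} = d := by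
  have hker : Nat.card (powMonoidHom d : G →* G).ker = d := by
    rw [IsCyclic.card_powMonoidHom_ker, Nat.card_eq_fintype_card, Nat.gcd_eq_right hd]
  -- both subgroups have `|G| / d` elements
  have hrange : (powMonoidHom d : G →* G).range = (powMonoidHom (Fintype.card G / d)).ker := by
    apply Subgroup.eq_of_le_of_card_ge
    · rintro _ ⟨y, rfl⟩
      rw [MonoidHom.mem_ker, powMonoidHom_apply, powMonoidHom_apply, ← pow_mul,
        Nat.mul_div_cancel' hd, pow_card_eq_one]
    · rw [IsCyclic.card_powMonoidHom_ker, IsCyclic.card_powMonoidHom_range,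
        Nat.card_eq_fintype_card, Nat.gcd_eq_right (Nat.div_dvd_of_dvd hd), Nat.gcd_eq_right hd]
  have hc_mem : c ∈ Set.range (powMonoidHom d : G →* G) := by
    rw [← MonoidHom.coe_range, hrange]
    exact hc
  change #{y | powMonoidHom d y = c} = d
  rw [MonoidHom.card_fiber_eq_of_mem_range _ hc_mem ⟨1, one_pow d⟩, ← Fintype.card_subtype,
    ← Nat.card_eq_fintype_card]
  exact hker

theorem FiniteField.card_pow_eq_of_pow_eq_one {K : Type*} [Field K] [Fintype K] [DecidableEq K]
    {d : ℕ} (hd : d ∣ Fintype.card K - 1) {c : K} (hc0 : c ≠ 0)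
    (hc : c ^ ((Fintype.card K - 1) / d) = 1) : #{y : K | y ^ d = c} = d := by
  have hd0 : d ≠ 0 := by
    rintro rfl
    have := Fintype.one_lt_card (α := K)
    rw [zero_dvd_iff] at hd
    omega
  rw [← Fintype.card_units] at hd hc
  refine Eq.trans ?_ (IsCyclic.card_pow_eq_of_pow_eq_one hd (c := Units.mk0 c hc0)
    (Units.ext (by simpa using hc)))
  symm
  refine card_nbij (fun u : Kˣ => (u : K)) ?_ ?_ ?_
  · intro u hu
    simp only [coe_filter, mem_univ, true_and, Set.mem_ofPred_eq] at hu ⊢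
    rw [← Units.val_pow_eq_pow_val, hu, Units.val_mk0]
  · intro u _ v _ h
    exact Units.ext h
  · intro y hy
    simp only [coe_filter, mem_univ, true_and, Set.mem_ofPred_eq] at hy ⊢
    have hy0 : y ≠ 0 := by
      rintro rfl
      exact hc0 (by rw [← hy, zero_pow hd0])
    exact ⟨Units.mk0 y hy0, Units.ext (by simpa using hy), rfl⟩

section Hermitian

variable {K : Type*} [Field K] [Fintype K] {t : ℕ}

theorem pow_succ_pow_eq_of_card_eq_sq (hK : Fintype.card K = t ^ 2) (y : K) :
    (y ^ (t + 1)) ^ t = y ^ (t + 1) := by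
  calc (y ^ (t + 1)) ^ t = y ^ t ^ 2 * y ^ t := by ring
    _ = y ^ (t + 1) := by rw [← hK, FiniteField.pow_card]; ring

theorem exists_ringHom_eq_pow_of_card_eq_pow {j : ℕ} (ht : IsPrimePow t)
    (hK : Fintype.card K = t ^ j) : ∃ φ : K →+* K, ∀ y, φ y = y ^ t := by
  obtain ⟨p, k, hp, -, rfl⟩ := ht
  have := Fact.mk hp.nat_prime
  have : CharP K p := charP_of_card_eq_prime_pow (f := k * j) (by rw [hK, pow_mul])
  exact ⟨iterateFrobenius K p k, iterateFrobenius_def p k⟩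

variable [DecidableEq K]

theorem card_pow_succ_eq_of_card_eq_sq (hK : Fintype.card K = t ^ 2) {c : K} (hc : c ^ t = c) :
    #{y : K | y ^ (t + 1) = c} = if c = 0 then 1 else t + 1 := by
  split_ifs with hc0
  · subst hc0
    simp only [pow_eq_zero_iff (Nat.succ_ne_zero t), filter_eq', mem_univ, if_true, card_singleton]
  have ht : 0 < t := by
    have := Fintype.card_pos (α := K)
    rw [hK] at this
    exact Nat.pos_of_ne_zero (by rintro rfl; simp at this)
  have hcard : Fintype.card K - 1 = (t + 1) * (t - 1) := by
    rw [hK]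
    cases t with
    | zero => omega
    | succ s => simp only [Nat.add_sub_cancel]; ring_nf; omega
  apply FiniteField.card_pow_eq_of_pow_eq_one ⟨t - 1, hcard⟩ hc0
  rw [hcard, Nat.mul_div_cancel_left _ t.succ_pos]
  refine mul_right_cancel₀ hc0 ?_
  rw [← pow_succ, Nat.sub_add_cancel ht, hc, one_mul]

theorem card_hermitian_succ_add_mul (ht : IsPrimePow t) (hK : Fintype.card K = t ^ 2) (m : ℕ) :
    #{x : Fin (m + 1) → K | ∑ i, x i ^ (t + 1) = 0} +
      t * #{x : Fin m → K | ∑ i, x i ^ (t + 1) = 0} = (t + 1) * t ^ (2 * m) := by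
  have hfiber : #{x : Fin (m + 1) → K | ∑ i, x i ^ (t + 1) = 0} =
      ∑ x : Fin m → K, #{y : K | y ^ (t + 1) = -∑ i, x i ^ (t + 1)} := by
    rw [card_filter, ← (Fin.consEquiv fun _ => K).sum_comp, Fintype.sum_prod_type_right]
    refine sum_congr rfl fun x _ => ?_
    rw [card_filter]
    refine sum_congr rfl fun y _ => ?_
    simp [Fin.sum_univ_succ, eq_neg_iff_add_eq_zero]
  obtain ⟨φ, hφ⟩ := exists_ringHom_eq_pow_of_card_eq_pow ht hK
  have hvalue (x : Fin m → K) : #{y : K | y ^ (t + 1) = -∑ i, x i ^ (t + 1)} =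
      if ∑ i, x i ^ (t + 1) = 0 then 1 else t + 1 := by
    have hfixed : (-∑ i, x i ^ (t + 1)) ^ t = -∑ i, x i ^ (t + 1) := by
      rw [← hφ, map_neg, map_sum]
      simp only [hφ, pow_succ_pow_eq_of_card_eq_sq hK]
    simp only [card_pow_succ_eq_of_card_eq_sq hK hfixed, neg_eq_zero]
  have hsplit := card_filter_add_card_filter_not (s := (univ : Finset (Fin m → K)))
    fun x => ∑ i, x i ^ (t + 1) = 0
  rw [card_univ, Fintype.card_fun, hK, Fintype.card_fin, ← pow_mul] at hsplit
  rw [hfiber, sum_congr rfl fun x _ => hvalue x, sum_ite, sum_const, sum_const, ← hsplit]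
  simp only [smul_eq_mul]
  ring

end Hermitian

theorem eq_one_add_mul_of_add_mul_eq (t : ℤ) {a : ℕ → ℤ} (h0 : a 0 = 1)
    (hsucc : ∀ m, a (m + 1) + t * a m = (t + 1) * t ^ (2 * m)) (m : ℕ) :
    a (m + 1) = 1 + (t ^ (m + 1) - (-1) ^ (m + 1)) * (t ^ m - (-1) ^ m) := by
  induction m with
  | zero => linear_combination hsucc 0 - t * h0
  | succ m ih =>
    have hsq : ((-1 : ℤ) ^ m) ^ 2 = 1 := by rw [← pow_mul, mul_comm, pow_mul, neg_one_sq, one_pow]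
    linear_combination hsucc (m + 1) - t * ih + (t + 1) * hsq

/-- Bose–Chakravarti: the number of rational points of the non-degenerate Hermitian
variety `x₀^(t+1) + ... + xₙ^(t+1) = 0` in `ℙⁿ(𝔽_{t²})` equals
`(t^(n+1) - (-1)^(n+1)) * (t^n - (-1)^n) / (t² - 1)` (stated in multiplied form). -/
theorem hermitian_variety_card (t n : ℕ) (hp : IsPrimePow t) (F : Type) [Field F] [Fintype F]
    (hF : Fintype.card F = t ^ 2) :
    ((t : ℤ) ^ 2 - 1) *
        (Nat.card {x : Projectivization F (Fin (n + 1) → F) |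
          ∑ i, (x.rep i) ^ (t + 1) = 0} : ℤ) =
      ((t : ℤ) ^ (n + 1) - (-1) ^ (n + 1)) * ((t : ℤ) ^ n - (-1) ^ n) := by
  classical
  have hcone := eq_one_add_mul_of_add_mul_eq t
    (a := fun m => (#{x : Fin m → F | ∑ i, x i ^ (t + 1) = 0} : ℤ)) (by simp)
    (fun m => by exact_mod_cast card_hermitian_succ_add_mul hp hF m) n
  have hhom (c : Fˣ) (v : Fin (n + 1) → F) :
      ∑ i, (c • v) i ^ (t + 1) = 0 ↔ ∑ i, v i ^ (t + 1) = 0 := by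
    simp [Units.smul_def, mul_pow, ← mul_sum]
  have hproj := Projectivization.card_cone (k := F)
    (P := fun v : Fin (n + 1) → F => ∑ i, v i ^ (t + 1) = 0) hhom (by simp)
  rw [Nat.card_eq_fintype_card (α := {v : Fin (n + 1) → F // _}), Fintype.card_subtype,
    Nat.card_eq_fintype_card (α := F), hF] at hproj
  have ht : 1 ≤ t ^ 2 := by rw [← hF]; exact Fintype.card_pos
  simp only [hproj] at hcone
  push_cast [Nat.cast_sub ht] at hcone
  rw [Set.coe_ofPred]
  linear_combination hcone
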